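/- Elimination of Eulerian terms via Eulerian transformation generators (the content of the recursions (3.3)–(3.4) in Lemma 3.2): fix integers s ≥ 1 and l ≥ 1 with l ≠ s, an integer p with 0 ≤ p ≤ s, and real numbers b_p, …, b_s with b_p ≠ 0; set v_s := ∑_{j=p}^{s} b_j·E_{s−j,j}. Then for every choice of real numbers β_p, …, β_{p+l} there exist real numbers c_0, …, c_l and real numbers γ_m for p+l+1 ≤ m ≤ l+s such that [ ∑_{j=0}^{l} c_j·E_{l−j,j} , v_s ] = ∑_{m=p}^{p+l} β_m·E_{l+s−m,m} + ∑_{m=p+l+1}^{l+s} γ_m·E_{l+s−m,m} as maps ℝ⁴ → ℝ⁴. -/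

import Mathlib

/-- Lie bracket of vector fields on ℝ⁴: [V,W](x) = DV(x)(W(x)) − DW(x)(V(x)). -/
noncomputable def bracket (V W : (Fin 4 → ℝ) → (Fin 4 → ℝ)) : (Fin 4 → ℝ) → (Fin 4 → ℝ) :=
  fun x => fderiv ℝ V x (W x) - fderiv ℝ W x (V x)

/-- The Eulerian vector field E₀₀(x) = x. -/
def E00 : (Fin 4 → ℝ) → (Fin 4 → ℝ) := fun x => x

/-- The rotational vector fields Θ¹₀₀(x) = (−y₁, x₁, 0, 0) and Θ²₀₀(x) = (0, 0, −y₂, x₂). -/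
def Theta0 (i : Fin 2) : (Fin 4 → ℝ) → (Fin 4 → ℝ) :=
  if i = 0 then (fun x => ![-(x 1), x 0, 0, 0]) else (fun x => ![0, 0, -(x 3), x 2])

/-- Z_{m,n}(x) = (x₁² + y₁²)^m (x₂² + y₂²)^n. -/
def Z (m n : ℕ) : (Fin 4 → ℝ) → ℝ :=
  fun x => ((x 0) ^ 2 + (x 1) ^ 2) ^ m * ((x 2) ^ 2 + (x 3) ^ 2) ^ n

/-- E_{m,n} = Z_{m,n} · E₀₀. -/
def Emn (m n : ℕ) : (Fin 4 → ℝ) → (Fin 4 → ℝ) := fun x => Z m n x • E00 x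

/-- Θ^i_{m,n} = Z_{m,n} · Θ^i₀₀. -/
def Thmn (i : Fin 2) (m n : ℕ) : (Fin 4 → ℝ) → (Fin 4 → ℝ) := fun x => Z m n x • Theta0 i x

/-!
Every `E_{m,n}` is a radial field `f(x) • x` with `f` homogeneous of degree `2(m+n)`, and by
Euler's identity `Df(x) x = k f(x)` the bracket of radial fields whose coefficients are
homogeneous of degrees `a` and `b` is radial with coefficient `(a - b) f g`.
With `u = x₁² + y₁²` and `v = x₂² + y₂²`, the coefficient `∑ⱼ cⱼ u^{l-j} vʲ` is the degree-`l`
homogenization of `C = ∑ⱼ cⱼ Xʲ`, so the bracket is `2(l - s)` times the homogenization of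
`C · B`, where `B = ∑ⱼ bⱼ Xʲ = Xᵖ B'` and `B'(0) = b_p ≠ 0`. Prescribing the coefficients of
`C · B` in degrees `p, …, p + l` means prescribing `C · B' mod X^{l+1}`, which is possible
because `B'` is invertible as a power series.
-/

open Polynomial Finset

theorem Finset.sum_Icc_add_sum_Icc_add_one {M : Type*} [AddCommMonoid M] (f : ℕ → M)
    {a b c : ℕ} (hab : a ≤ b + 1) (hbc : b ≤ c) :
    ∑ i ∈ Icc a b, f i + ∑ i ∈ Icc (b + 1) c, f i = ∑ i ∈ Icc a c, f i := by
  rw [← sum_union (disjoint_left.mpr fun i hi hi' => by simp only [mem_Icc] at hi hi'; omega)]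
  congr 1
  ext i
  simp only [mem_union, mem_Icc]
  omega

namespace Polynomial

theorem coeff_sum_Icc_monomial {R : Type*} [Semiring R] (b : ℕ → R) (p s j : ℕ) :
    (∑ k ∈ Icc p s, monomial k (b k)).coeff j = if j ∈ Icc p s then b j else 0 := by
  simp [coeff_monomial]

theorem exists_X_pow_mul_eq_sum_Icc_monomial {R : Type*} [Semiring R] (b : ℕ → R) {p s : ℕ}
    (hp : p ≤ s) : ∃ Q : R[X], Q.coeff 0 = b p ∧ X ^ p * Q = ∑ k ∈ Icc p s, monomial k (b k) := by
  obtain ⟨Q, hQ⟩ : X ^ p ∣ ∑ k ∈ Icc p s, monomial k (b k) := X_pow_dvd_iff.mpr fun j hj => by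
    rw [coeff_sum_Icc_monomial, if_neg (by simp only [mem_Icc]; omega)]
  refine ⟨Q, ?_, hQ.symm⟩
  have hcoeff := coeff_sum_Icc_monomial b p s p
  rwa [hQ, coeff_X_pow_mul', if_pos le_rfl, Nat.sub_self,
    if_pos (mem_Icc.mpr ⟨le_rfl, hp⟩)] at hcoeff

variable {K : Type*} [Field K]

theorem exists_natDegree_le_coeff_mul_eq {Q : K[X]} (hQ : Q.coeff 0 ≠ 0) (n : ℕ) (d : ℕ → K) :
    ∃ P : K[X], P.natDegree ≤ n ∧ ∀ t ≤ n, (P * Q).coeff t = d t := by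
  set F : PowerSeries K := PowerSeries.mk d * (Q : PowerSeries K)⁻¹
  refine ⟨PowerSeries.trunc (n + 1) F, Nat.lt_succ_iff.mp (PowerSeries.natDegree_trunc_lt F n),
    fun t ht => ?_⟩
  have hFQ : F * Q = PowerSeries.mk d := by
    rw [mul_assoc, PowerSeries.inv_mul_cancel _ (by simpa using hQ), mul_one]
  have ht : t < n + 1 := Nat.lt_succ_of_le ht
  calc (PowerSeries.trunc (n + 1) F * Q).coeff t
      = (PowerSeries.trunc (n + 1) (↑(PowerSeries.trunc (n + 1) F) * ↑Q)).coeff t := by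
        rw [PowerSeries.coeff_trunc, if_pos ht, ← coe_mul, coeff_coe]
    _ = d t := by
        rw [PowerSeries.trunc_trunc_mul, PowerSeries.coeff_trunc, if_pos ht, hFQ,
          PowerSeries.coeff_mk]

theorem exists_natDegree_le_coeff_mul_X_pow_mul_eq {Q : K[X]} (hQ : Q.coeff 0 ≠ 0)
    (p n : ℕ) (d : ℕ → K) :
    ∃ P : K[X], P.natDegree ≤ n ∧ ∀ m ∈ Icc p (p + n), (P * (X ^ p * Q)).coeff m = d m := by
  obtain ⟨P, hPdeg, hP⟩ := exists_natDegree_le_coeff_mul_eq hQ n fun t => d (p + t)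
  refine ⟨P, hPdeg, fun m hm => ?_⟩
  rw [mem_Icc] at hm
  rw [mul_left_comm, coeff_X_pow_mul', if_pos hm.1, hP _ (by omega), Nat.add_sub_cancel' hm.1]

end Polynomial

section Homogeneous

variable {E : Type*} [NormedAddCommGroup E] [NormedSpace ℝ E]

theorem fderiv_apply_self_of_homogeneous {f : E → ℝ} {k : ℕ} {x : E}
    (hf : ∀ (t : ℝ) y, f (t • y) = t ^ k * f y) (hd : DifferentiableAt ℝ f x) :
    fderiv ℝ f x x = k * f x := by
  have hline : HasDerivAt (fun t : ℝ => t • x) x 1 := by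
    simpa using (hasDerivAt_id (1 : ℝ)).smul_const x
  have h1 : HasDerivAt (fun t : ℝ => f (t • x)) (fderiv ℝ f x x) 1 :=
    hd.hasFDerivAt.comp_hasDerivAt_of_eq 1 hline (one_smul ℝ x).symm
  have h2 : HasDerivAt (fun t : ℝ => f (t • x)) (k * f x) 1 := by
    simp_rw [hf]
    simpa using (hasDerivAt_pow k (1 : ℝ)).mul_const (f x)
  exact h1.unique h2

theorem fderiv_smul_self_apply_smul_self {f : E → ℝ} {k : ℕ} {x : E} (c : ℝ)
    (hf : ∀ (t : ℝ) y, f (t • y) = t ^ k * f y) (hd : DifferentiableAt ℝ f x) :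
    fderiv ℝ (fun y => f y • y) x (c • x) = ((k + 1) * c * f x) • x := by
  rw [fderiv_fun_smul hd differentiableAt_fun_id]
  simp only [fderiv_fun_id, map_smul, add_apply, smul_apply, ContinuousLinearMap.id_apply,
    ContinuousLinearMap.smulRight_apply, fderiv_apply_self_of_homogeneous hf hd]
  module

end Homogeneous

theorem bracket_smul_self_of_homogeneous {f g : (Fin 4 → ℝ) → ℝ} {a b : ℕ}
    (hf : ∀ (t : ℝ) y, f (t • y) = t ^ a * f y) (hg : ∀ (t : ℝ) y, g (t • y) = t ^ b * g y)
    (hfd : Differentiable ℝ f) (hgd : Differentiable ℝ g) :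
    bracket (fun x => f x • x) (fun x => g x • x) =
      fun x => (((a : ℝ) - b) * f x * g x) • x := by
  funext x
  rw [bracket, fderiv_smul_self_apply_smul_self _ hf (hfd x),
    fderiv_smul_self_apply_smul_self _ hg (hgd x), ← sub_smul]
  congr 1
  ring

theorem Z_smul (m n : ℕ) (t : ℝ) (x : Fin 4 → ℝ) :
    Z m n (t • x) = t ^ (2 * (m + n)) * Z m n x := by
  simp only [Z, Pi.smul_apply, smul_eq_mul, mul_pow, ← mul_add]
  ring

@[fun_prop]
theorem differentiable_Z (m n : ℕ) : Differentiable ℝ (Z m n) := by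
  unfold Z
  fun_prop

noncomputable def zForm (n : ℕ) (P : ℝ[X]) (x : Fin 4 → ℝ) : ℝ :=
  ∑ j ∈ range (n + 1), P.coeff j * Z (n - j) j x

theorem zForm_eq_eval_homogenize (n : ℕ) (P : ℝ[X]) (x : Fin 4 → ℝ) :
    zForm n P x =
      MvPolynomial.eval ![x 2 ^ 2 + x 3 ^ 2, x 0 ^ 2 + x 1 ^ 2] (P.homogenize n) := by
  rw [zForm, homogenize, map_sum, Nat.sum_antidiagonal_eq_sum_range_succ_mk]
  refine sum_congr rfl fun j _ => ?_
  simp [MvPolynomial.eval_monomial, Finsupp.prod_fintype, Z, mul_comm]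

theorem zForm_mul {m n : ℕ} {P Q : ℝ[X]} (hP : P.natDegree ≤ m) (hQ : Q.natDegree ≤ n)
    (x : Fin 4 → ℝ) : zForm m P x * zForm n Q x = zForm (m + n) (P * Q) x := by
  simp only [zForm_eq_eval_homogenize, homogenize_mul P Q hP hQ, map_mul]

theorem zForm_smul (n : ℕ) (P : ℝ[X]) (t : ℝ) (x : Fin 4 → ℝ) :
    zForm n P (t • x) = t ^ (2 * n) * zForm n P x := by
  rw [zForm, zForm, mul_sum]
  refine sum_congr rfl fun j hj => ?_
  rw [Z_smul, Nat.sub_add_cancel (mem_range_succ_iff.mp hj)]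
  ring

theorem differentiable_zForm (n : ℕ) (P : ℝ[X]) : Differentiable ℝ (zForm n P) := by
  unfold zForm
  fun_prop

theorem bracket_zForm_smul_self {m n : ℕ} {P Q : ℝ[X]} (hP : P.natDegree ≤ m)
    (hQ : Q.natDegree ≤ n) :
    bracket (fun x => zForm m P x • x) (fun x => zForm n Q x • x) =
      fun x => (2 * ((m : ℝ) - n) * zForm (m + n) (P * Q) x) • x := by
  rw [bracket_smul_self_of_homogeneous (zForm_smul m P) (zForm_smul n Q)
    (differentiable_zForm m P) (differentiable_zForm n Q)]
  funext x
  rw [mul_assoc, zForm_mul hP hQ]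
  congr 1
  push_cast
  ring

theorem sum_range_coeff_smul_Emn (n : ℕ) (P : ℝ[X]) (x : Fin 4 → ℝ) :
    ∑ j ∈ range (n + 1), P.coeff j • Emn (n - j) j x = zForm n P x • x := by
  simp only [Emn, E00, smul_smul, zForm, sum_smul]

theorem sum_Icc_coeff_smul_Emn {p : ℕ} {P : ℝ[X]} (hP : ∀ j < p, P.coeff j = 0) (n : ℕ)
    (x : Fin 4 → ℝ) : ∑ j ∈ Icc p n, P.coeff j • Emn (n - j) j x = zForm n P x • x := by
  rw [← sum_range_coeff_smul_Emn]
  refine sum_subset (fun j hj => ?_) fun j hjn hj => ?_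
  · simp only [mem_Icc, mem_range] at hj ⊢
    omega
  · simp only [mem_Icc, mem_range, not_and, not_le] at hj hjn
    rw [hP j (by omega), zero_smul]

theorem sum_Icc_smul_Emn (a : ℕ → ℝ) (p n : ℕ) (x : Fin 4 → ℝ) :
    ∑ j ∈ Icc p n, a j • Emn (n - j) j x = zForm n (∑ k ∈ Icc p n, monomial k (a k)) x • x := by
  rw [← sum_Icc_coeff_smul_Emn (p := p) fun j hj => by
    rw [coeff_sum_Icc_monomial, if_neg (by simp only [mem_Icc]; omega)]]
  exact sum_congr rfl fun j hj => by rw [coeff_sum_Icc_monomial, if_pos hj]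

theorem eulerian_elimination_general (s l p : ℕ) (hls : l ≠ s)
    (hp : p ≤ s) (b : ℕ → ℝ) (hb : b p ≠ 0) (β : ℕ → ℝ) :
    ∃ c γ : ℕ → ℝ,
      bracket (fun x => ∑ j ∈ Finset.range (l + 1), c j • Emn (l - j) j x)
              (fun x => ∑ j ∈ Finset.Icc p s, b j • Emn (s - j) j x) =
      (fun x : Fin 4 → ℝ =>
        (∑ m ∈ Finset.Icc p (p + l), β m • Emn (l + s - m) m x) +
          ∑ m ∈ Finset.Icc (p + l + 1) (l + s), γ m • Emn (l + s - m) m x) := by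
  set K : ℝ := 2 * ((l : ℝ) - s)
  have hK : K ≠ 0 := mul_ne_zero two_ne_zero (sub_ne_zero.mpr (Nat.cast_injective.ne hls))
  obtain ⟨B', hB'0, hB'⟩ := exists_X_pow_mul_eq_sum_Icc_monomial b hp
  set B : ℝ[X] := ∑ k ∈ Icc p s, monomial k (b k)
  have hBdeg : B.natDegree ≤ s :=
    natDegree_sum_le_of_forall_le _ _ fun k hk => (natDegree_monomial_le _).trans (mem_Icc.mp hk).2
  obtain ⟨C, hCdeg, hC⟩ :=
    exists_natDegree_le_coeff_mul_X_pow_mul_eq (hB'0 ▸ hb) p l fun m => β m / K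
  refine ⟨C.coeff, fun m => K * (C * B).coeff m, ?_⟩
  have hCB (j : ℕ) (hj : j < p) : (C * B).coeff j = 0 := by
    rw [← hB', mul_left_comm, coeff_X_pow_mul', if_neg (by omega)]
  have hV : (fun x => ∑ j ∈ range (l + 1), C.coeff j • Emn (l - j) j x) =
      fun x => zForm l C x • x := funext (sum_range_coeff_smul_Emn l C)
  have hW : (fun x => ∑ j ∈ Icc p s, b j • Emn (s - j) j x) = fun x => zForm s B x • x :=
    funext (sum_Icc_smul_Emn b p s)
  have hβ (m : ℕ) (hm : m ∈ Icc p (p + l)) : β m = K * (C * B).coeff m := by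
    rw [← hB', hC m hm, mul_div_cancel₀ _ hK]
  rw [hV, hW, bracket_zForm_smul_self hCdeg hBdeg]
  funext x
  rw [sum_congr rfl fun m hm => by rw [hβ m hm],
    sum_Icc_add_sum_Icc_add_one _ (by omega) (by omega)]
  simp_rw [mul_smul, ← smul_sum]
  rw [sum_Icc_coeff_smul_Emn hCB, smul_smul, add_comm l s]

/-- elimination of Eulerian terms via Eulerian transformation generators
(recursions (3.3)–(3.4) in Lemma 3.2). -/
theorem eulerian_elimination (s l p : ℕ) (hs : 1 ≤ s) (hl : 1 ≤ l) (hls : l ≠ s)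
    (hp : p ≤ s) (b : ℕ → ℝ) (hb : b p ≠ 0) (β : ℕ → ℝ) :
    ∃ c γ : ℕ → ℝ,
      bracket (fun x => ∑ j ∈ Finset.range (l + 1), c j • Emn (l - j) j x)
              (fun x => ∑ j ∈ Finset.Icc p s, b j • Emn (s - j) j x) =
      (fun x : Fin 4 → ℝ =>
        (∑ m ∈ Finset.Icc p (p + l), β m • Emn (l + s - m) m x) +
          ∑ m ∈ Finset.Icc (p + l + 1) (l + s), γ m • Emn (l + s - m) m x) :=
  eulerian_elimination_general s l p hls hp b hb β
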